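/- In the axiomatic system B_K, the rule of replacement for ∘ is derivable: if ⊢ φ ↔ ψ, then ⊢ ∘φ ↔ ∘ψ. -/
import Mathlib


/-- Formulas of the language L∘. -/
inductive RIForm : Type where
  | var : Nat → RIForm
  | neg : RIForm → RIForm
  | and : RIForm → RIForm → RIForm
  | circ : RIForm → RIForm
deriving DecidableEq

def RIForm.imp (φ ψ : RIForm) : RIForm := .neg (.and φ (.neg ψ))
def RIForm.or (φ ψ : RIForm) : RIForm := .neg (.and (.neg φ) (.neg ψ))
def RIForm.top : RIForm := .neg (.and (.var 0) (.neg (.var 0)))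
def RIForm.bot : RIForm := .and (.var 0) (.neg (.var 0))
def RIForm.iff (φ ψ : RIForm) : RIForm := .and (φ.imp ψ) (ψ.imp φ)

/-- Reflexive-insensitive satisfaction. -/
def riSat {W : Type} (R : W → W → Prop) (V : Nat → W → Prop) : W → RIForm → Prop
  | w, .var p => V p w
  | w, .neg φ => ¬ riSat R V w φ
  | w, .and φ ψ => riSat R V w φ ∧ riSat R V w ψ
  | w, .circ φ => ¬ riSat R V w φ ∨ ∀ x, R w x → riSat R V x φ

/-- Validity on a frame under the reflexive-insensitive semantics. -/
def riValid {W : Type} (R : W → W → Prop) (φ : RIForm) : Prop :=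
  ∀ V w, riSat R V w φ

/-- Boolean evaluation treating variables and ∘-formulas as atoms. -/
def propEval (v : RIForm → Prop) : RIForm → Prop
  | .var p => v (.var p)
  | .neg φ => ¬ propEval v φ
  | .and φ ψ => propEval v φ ∧ propEval v ψ
  | .circ φ => v (.circ φ)

/-- Substitution instances of propositional tautologies. -/
def RITaut (φ : RIForm) : Prop := ∀ v, propEval v φ

/-- Uniform substitution. -/
def RIForm.subst (σ : Nat → RIForm) : RIForm → RIForm
  | .var p => σ p
  | .neg φ => .neg (φ.subst σ)
  | .and φ ψ => .and (φ.subst σ) (ψ.subst σ)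
  | .circ φ => .circ (φ.subst σ)

/-- The minimal RI-logic B_K. -/
inductive BK : RIForm → Prop
  | taut {φ} : RITaut φ → BK φ
  | b0 : BK (.circ RIForm.top)
  | b1 (φ : RIForm) : BK ((RIForm.neg (.circ φ)).imp φ)
  | b2 (φ ψ : RIForm) : BK ((RIForm.and (.circ φ) (.circ ψ)).imp (.circ (.and φ ψ)))
  | mp {φ ψ} : BK (φ.imp ψ) → BK φ → BK ψ
  | us {φ} (σ : Nat → RIForm) : BK φ → BK (φ.subst σ)
  | bN {φ ψ} : BK (φ.imp ψ) →
      BK ((RIForm.and (.circ φ) φ).imp (RIForm.and (.circ ψ) ψ))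

theorem BK_replacement (φ ψ : RIForm) (h : BK (φ.iff ψ)) :
    BK ((RIForm.circ φ).iff (.circ ψ)) := by
  have h1 : BK (φ.imp ψ) :=
    BK.mp (BK.taut (by intro v; simp only [RIForm.iff, RIForm.imp, propEval]; tauto)) h
  have h2 : BK (ψ.imp φ) :=
    BK.mp (BK.taut (by intro v; simp only [RIForm.iff, RIForm.imp, propEval]; tauto)) h
  have A := BK.bN h1
  have B := BK.bN h2
  have C := BK.b1 φ
  have D := BK.b1 ψ
  refine BK.mp (BK.mp (BK.mp (BK.mp (BK.mp (BK.taut ?_) A) B) C) D) h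
  intro v; simp only [RIForm.iff, RIForm.imp, propEval]; tauto
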